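/- If X is normally distributed with mean μ and variance σ² > 0, and C is a constant, then E[max(X − C, 0)] = (μ − C)·Φ((μ − C)/σ) + σ·φ((μ − C)/σ), where φ and Φ are the standard normal density and cumulative distribution functions. -/

import Mathlib

open MeasureTheory ProbabilityTheory Real Set Filter

/-- standard normal density -/
noncomputable def stdPdf (z : ℝ) : ℝ := Real.exp (-z ^ 2 / 2) / Real.sqrt (2 * Real.pi)

/-- standard normal cumulative distribution function -/
noncomputable def stdCdf (x : ℝ) : ℝ := ∫ z in Set.Iic x, stdPdf z

lemma stdPdf_eq (z : ℝ) : stdPdf z = (Real.sqrt (2 * Real.pi))⁻¹ * Real.exp (-(1/2) * z ^ 2) := by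
  rw [stdPdf]; ring_nf

lemma stdPdf_nonneg (z : ℝ) : 0 ≤ stdPdf z := by
  unfold stdPdf
  positivity

lemma stdPdf_neg (z : ℝ) : stdPdf (-z) = stdPdf z := by simp [stdPdf]

lemma integrable_stdPdf : Integrable stdPdf := by
  have : stdPdf = fun z => (Real.sqrt (2 * Real.pi))⁻¹ * Real.exp (-(1/2) * z ^ 2) :=
    funext stdPdf_eq
  rw [this]
  exact (integrable_exp_neg_mul_sq (by norm_num : (0:ℝ) < 1/2)).const_mul _

lemma tendsto_stdPdf_atTop : Filter.Tendsto stdPdf Filter.atTop (nhds 0) := by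
  have : stdPdf = fun z => (Real.sqrt (2 * Real.pi))⁻¹ * Real.exp (-(1/2) * z ^ 2) :=
    funext stdPdf_eq
  rw [this, show (0:ℝ) = (Real.sqrt (2 * Real.pi))⁻¹ * 0 by ring]
  refine Filter.Tendsto.const_mul _ ?_
  refine Real.tendsto_exp_atBot.comp ?_
  exact Tendsto.const_mul_atTop_of_neg (by norm_num) (tendsto_pow_atTop (by norm_num))

lemma integrable_mul_stdPdf : Integrable (fun z => z * stdPdf z) := by
  simp_rw [stdPdf_eq, mul_comm (Real.sqrt (2 * Real.pi))⁻¹, ← mul_assoc]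
  exact (integrable_mul_exp_neg_mul_sq (by norm_num : (0:ℝ) < 1/2)).mul_const _

lemma hasDerivAt_neg_stdPdf (z : ℝ) : HasDerivAt (fun y => -stdPdf y) (z * stdPdf z) z := by
  have h : HasDerivAt (fun y : ℝ => Real.exp (-y ^ 2 / 2)) (-z * Real.exp (-z ^ 2 / 2)) z := by
    have h1 : HasDerivAt (fun y : ℝ => -y ^ 2 / 2) (-z) z := by
      have := ((hasDerivAt_pow 2 z).neg).div_const 2
      simpa using this.congr_deriv (by ring)
    simpa [mul_comm] using h1.exp
  have : HasDerivAt (fun y => -(Real.exp (-y ^ 2 / 2) / Real.sqrt (2 * Real.pi))) _ z :=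
    (h.div_const (Real.sqrt (2 * Real.pi))).neg
  simp only [stdPdf]
  convert this using 1
  ring

lemma integral_Ioi_mul_stdPdf (a : ℝ) : ∫ z in Ioi a, z * stdPdf z = stdPdf a := by
  have := integral_Ioi_of_hasDerivAt_of_tendsto' (f := fun y => -stdPdf y)
    (f' := fun z => z * stdPdf z) (a := a) (m := 0)
    (fun x _ => hasDerivAt_neg_stdPdf x) integrable_mul_stdPdf.integrableOn ?_
  · simpa using this
  · rw [show (0:ℝ) = -0 by ring]
    exact tendsto_stdPdf_atTop.neg

lemma stdCdf_neg_eq (a : ℝ) : stdCdf (-a) = ∫ z in Ioi a, stdPdf z := by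
  rw [stdCdf, show (∫ z in Iic (-a), stdPdf z) = ∫ z in Iic (-a), stdPdf (-z) by
    simp [stdPdf_neg], integral_comp_neg_Iic, neg_neg]

/-- If `X ~ N(μ, σ²)` with `σ > 0` and `C` is a constant, then
`E[max (X - C) 0] = (μ - C) Φ((μ - C)/σ) + σ φ((μ - C)/σ)`. -/
theorem bachelier_call_price {Ω : Type*} [MeasureSpace Ω]
    [IsProbabilityMeasure (ℙ : Measure Ω)]
    (X : Ω → ℝ) (hXm : Measurable X) (μ σ : ℝ) (hσ : 0 < σ)
    (hX : Measure.map X ℙ = gaussianReal μ (Real.toNNReal (σ ^ 2)))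
    (C : ℝ) :
    ∫ ω, max (X ω - C) 0 ∂ℙ =
      (μ - C) * stdCdf ((μ - C) / σ) + σ * stdPdf ((μ - C) / σ) := by
  set v : NNReal := Real.toNNReal (σ ^ 2) with hvdef
  have hσ2 : (v : ℝ) = σ ^ 2 := Real.coe_toNNReal _ (sq_nonneg σ)
  have hv : v ≠ 0 := by
    intro h
    rw [h] at hσ2
    simp at hσ2
    nlinarith
  -- Step A : transport to the Gaussian measure
  have hcont : Continuous (fun x : ℝ => max (x - C) 0) :=
    (continuous_id.sub continuous_const).max continuous_const
  have stepA : ∫ ω, max (X ω - C) 0 ∂ℙ = ∫ x, max (x - C) 0 ∂(gaussianReal μ v) := by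
    rw [← hX, integral_map hXm.aemeasurable hcont.aestronglyMeasurable]
  -- Step B : density
  have stepB : ∫ x, max (x - C) 0 ∂(gaussianReal μ v)
      = ∫ x, gaussianPDFReal μ v x * max (x - C) 0 := by
    rw [gaussianReal_of_var_ne_zero _ hv, gaussianPDF_def]
    simp_rw [ENNReal.ofReal]
    rw [integral_withDensity_eq_integral_smul
      ((measurable_gaussianPDFReal μ v).real_toNNReal) _]
    congr 1
    ext x
    rw [NNReal.smul_def, Real.coe_toNNReal _ (gaussianPDFReal_nonneg μ v x), smul_eq_mul]
  -- change of variables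
  set g : ℝ → ℝ := fun x => gaussianPDFReal μ v x * max (x - C) 0 with hg
  have stepC : ∫ x, g x = σ * ∫ z, g (σ * z + μ) := by
    have h1 : ∫ z, (fun x => g (x + μ)) (σ * z) = |σ⁻¹| • ∫ x, g (x + μ) :=
      Measure.integral_comp_mul_left (fun x => g (x + μ)) σ
    rw [integral_add_right_eq_self (fun x => g x) μ] at h1
    simp only [smul_eq_mul, abs_of_pos (inv_pos.mpr hσ)] at h1
    rw [h1]
    field_simp
  have pdfval : ∀ z : ℝ, gaussianPDFReal μ v (σ * z + μ) = stdPdf z / σ := by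
    intro z
    rw [gaussianPDFReal, stdPdf, hσ2]
    have h2 : Real.sqrt (2 * Real.pi * σ ^ 2) = Real.sqrt (2 * Real.pi) * σ := by
      rw [Real.sqrt_mul (by positivity), Real.sqrt_sq hσ.le]
    rw [h2]
    have h3 : -(σ * z + μ - μ) ^ 2 / (2 * σ ^ 2) = -z ^ 2 / 2 := by
      field_simp
      ring
    rw [h3]
    field_simp
  set a : ℝ := (C - μ) / σ with ha
  have stepD : (fun z => g (σ * z + μ))
      = Set.indicator (Ioi a) (fun z => stdPdf z / σ * (σ * z + μ - C)) := by
    ext z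
    by_cases hz : z ∈ Ioi a
    · rw [Set.indicator_of_mem hz, hg]
      simp only
      rw [pdfval z, add_sub_right_comm]
      congr 1
      rw [max_eq_left]
      have : a < z := hz
      rw [ha, div_lt_iff₀ hσ] at this
      nlinarith
    · rw [Set.indicator_of_notMem hz, hg]
      simp only
      rw [pdfval z, add_sub_right_comm]
      have : ¬ a < z := hz
      push_neg at this
      rw [ha, le_div_iff₀ hσ] at this
      rw [max_eq_right (by nlinarith)]
      ring
  have stepE : ∫ z in Ioi a, stdPdf z / σ * (σ * z + μ - C)
      = stdPdf a + (μ - C) / σ * stdCdf (-a) := by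
    have heq : ∀ z : ℝ, stdPdf z / σ * (σ * z + μ - C)
        = z * stdPdf z + (μ - C) / σ * stdPdf z := by
      intro z; field_simp; ring
    rw [setIntegral_congr_fun measurableSet_Ioi (fun z _ => heq z)]
    rw [integral_add integrable_mul_stdPdf.integrableOn
      ((integrable_stdPdf.const_mul _).integrableOn), integral_Ioi_mul_stdPdf,
      integral_const_mul, stdCdf_neg_eq]
  have hna : -a = (μ - C) / σ := by rw [ha]; ring
  rw [stepA, stepB, stepC, stepD, integral_indicator measurableSet_Ioi, stepE, ← hna,
    ← stdPdf_neg a, hna]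
  field_simp
  ring
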